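/- arXiv:2002.09067 — 3 statements merged into one kernel-verified Lean document; each statement's English description precedes it below -/
import Mathlib

section
/- Let T be a finite set of traces (finite sequences over ℕ) that is prefix-free (no trace is a proper prefix of another), and let f : T → Y be a map to outputs. Then f is injective if and only if for every common proper prefix t' of traces in T, the collection of sets F(t'·[c]) = {f(t) : t ∈ T, t'·[c] is a prefix of t}, indexed over those c for which this set is nonempty, forms a partition of F(t') = {f(t) : t ∈ T, t' is a prefix of t} into pairwise disjoint nonempty sets. -/
/-- For a set of traces `T`, a map `f` and a prefix `s`, the set of outputs of traces in `T`
extending `s`. -/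
def outputSet {Y : Type*} (T : Finset (List ℕ)) (f : List ℕ → Y) (s : List ℕ) : Set Y :=
  {y | ∃ t ∈ T, s <+: t ∧ f t = y}

lemma exists_split (t₁ t₂ : List ℕ) (h1 : ¬ t₁ <+: t₂) (h2 : ¬ t₂ <+: t₁) :
    ∃ p c₁ c₂ r₁ r₂, c₁ ≠ c₂ ∧ t₁ = p ++ c₁ :: r₁ ∧ t₂ = p ++ c₂ :: r₂ := by
  induction t₁ generalizing t₂ with
  | nil => exact absurd (List.nil_prefix) h1
  | cons a s₁ ih =>
    cases t₂ with
    | nil => exact absurd (List.nil_prefix) h2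
    | cons b s₂ =>
      by_cases hab : a = b
      · subst hab
        have h1' : ¬ s₁ <+: s₂ := fun h => h1 (List.cons_prefix_cons.mpr ⟨rfl, h⟩)
        have h2' : ¬ s₂ <+: s₁ := fun h => h2 (List.cons_prefix_cons.mpr ⟨rfl, h⟩)
        obtain ⟨p, c₁, c₂, r₁, r₂, hc, e1, e2⟩ := ih s₂ h1' h2'
        exact ⟨a :: p, c₁, c₂, r₁, r₂, hc, by simp [e1], by simp [e2]⟩
      · exact ⟨[], a, b, s₁, s₂, hab, rfl, rfl⟩

/-- `f` is injective on a finite prefix-free set of traces `T` iff for every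
common proper prefix `t'` of traces in `T`, the nonempty sets `F(t'·[c])` form a partition of
`F(t')` into pairwise disjoint nonempty sets. -/
theorem trace_injective_iff_partition {Y : Type*} (T : Finset (List ℕ))
    (hpf : ∀ t₁ ∈ T, ∀ t₂ ∈ T, t₁ <+: t₂ → t₁ = t₂) (f : List ℕ → Y) :
    Set.InjOn f (T : Set (List ℕ)) ↔
      ∀ t' : List ℕ, (∃ t ∈ T, t' <+: t ∧ t' ≠ t) →
        ((∀ c₁ c₂ : ℕ, c₁ ≠ c₂ →
            Disjoint (outputSet T f (t' ++ [c₁])) (outputSet T f (t' ++ [c₂]))) ∧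
          (⋃ c : ℕ, outputSet T f (t' ++ [c])) = outputSet T f t') := by
  constructor
  · intro hinj t' ⟨s, hsT, hst, hsne⟩
    constructor
    · intro c₁ c₂ hc
      rw [Set.disjoint_left]
      rintro y ⟨u, huT, hpu, rfl⟩ ⟨v, hvT, hpv, hfv⟩
      have huv : u = v := hinj huT hvT hfv.symm
      subst huv
      have := (List.prefix_or_prefix_of_prefix hpu hpv).elim
        (fun h => h.eq_of_length (by simp)) (fun h => (h.eq_of_length (by simp)).symm)
      exact hc (by simpa using List.append_cancel_left this)
    · ext y
      simp only [Set.mem_iUnion]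
      constructor
      · rintro ⟨c, u, huT, hpu, rfl⟩
        exact ⟨u, huT, (List.prefix_append t' [c]).trans hpu, rfl⟩
      · rintro ⟨u, huT, hpu, rfl⟩
        have hne : t' ≠ u := by
          rintro rfl
          exact hsne (hpf t' huT s hsT hst)
        obtain ⟨w, rfl⟩ := hpu
        cases w with
        | nil => simp at hne
        | cons c r =>
          exact ⟨c, t' ++ c :: r, huT, ⟨r, by simp⟩, rfl⟩
  · intro hp u huT v hvT hfuv
    by_contra hne
    have h1 : ¬ u <+: v := fun h => hne (hpf u huT v hvT h)
    have h2 : ¬ v <+: u := fun h => hne ((hpf v hvT u huT h).symm)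
    obtain ⟨p, c₁, c₂, r₁, r₂, hc, e1, e2⟩ := exists_split u v h1 h2
    have hprop : ∃ t ∈ T, p <+: t ∧ p ≠ t := by
      refine ⟨u, huT, ⟨c₁ :: r₁, e1.symm⟩, ?_⟩
      intro h; rw [← h] at e1; simpa using congrArg List.length e1
    have hd := (hp p hprop).1 c₁ c₂ hc
    rw [Set.disjoint_left] at hd
    exact hd ⟨u, huT, ⟨r₁, by simp [e1]⟩, rfl⟩ ⟨v, hvT, ⟨r₂, by simp [e2]⟩, hfuv.symm⟩
end

section
/- With the setup of the UniqueRandomizer trie: if at every node the sampler moves to a child with probability proportional to that child's unsampled mass (where the unsampled mass of a node corresponding to prefix t' is ∑_{t ∈ T, t' prefix of t, t ∉ S} P(t)), then the probability of reaching the leaf corresponding to trace t equals P(t)/(1 − ∑_{s∈S} P(s)) if t ∉ S and 0 if t ∈ S. In other words, the sampled trace is distributed according to the conditional distribution P(t | t ∉ S). -/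
/-- The unsampled probability mass of a prefix `t'`: the total probability of traces in `T`
extending `t'` that have not yet been sampled (i.e. are not in `S`). -/
def unsampledMass (T S : Finset (List ℕ)) (P : List ℕ → ℝ) (t' : List ℕ) : ℝ :=
  ∑ t ∈ T.filter (fun t => t' <+: t ∧ t ∉ S), P t

private lemma prod_div_telescope' (f : ℕ → ℝ) (n : ℕ) (h : ∀ i ≤ n, f i ≠ 0) :
    ∏ i ∈ Finset.range n, f (i + 1) / f i = f n / f 0 := by
  induction n with
  | zero => simp [div_self (h 0 le_rfl)]
  | succ n ih =>
    rw [Finset.prod_range_succ, ih (fun i hi => h i (hi.trans n.le_succ)),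
      div_mul_div_comm, mul_comm (f n), mul_div_mul_right _ _ (h n n.le_succ)]

/-- mass of a leaf -/
private lemma mass_leaf (T S : Finset (List ℕ)) (P : List ℕ → ℝ)
    (hpf : ∀ t₁ ∈ T, ∀ t₂ ∈ T, t₁ <+: t₂ → t₁ = t₂)
    (t : List ℕ) (ht : t ∈ T) :
    unsampledMass T S P t = if t ∈ S then 0 else P t := by
  unfold unsampledMass
  by_cases hts : t ∈ S
  · simp only [hts, if_true]
    rw [Finset.sum_eq_zero]
    intro s hs
    simp only [Finset.mem_filter] at hs
    exact absurd (hpf t ht s hs.1 hs.2.1 ▸ hts) hs.2.2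
  · simp only [hts, if_false]
    rw [Finset.sum_eq_single_of_mem t]
    · simp [ht, hts]
    · intro s hs hne
      simp only [Finset.mem_filter] at hs
      exact absurd (hpf t ht s hs.1 hs.2.1).symm hne
  
/-- children masses sum to parent mass, for a node not itself a trace -/
private lemma tsum_children (T S : Finset (List ℕ)) (P : List ℕ → ℝ)
    (p : List ℕ) (hp : p ∉ T) :
    ∑' c : ℕ, unsampledMass T S P (p ++ [c]) = unsampledMass T S P p := by
  have hfilter : ∀ c : ℕ, T.filter (fun s => p ++ [c] <+: s ∧ s ∉ S) =
      (T.filter (fun s => p <+: s ∧ s ∉ S)).filter (fun s => p ++ [c] <+: s) := by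
    intro c
    ext s
    simp only [Finset.mem_filter]
    constructor
    · rintro ⟨h1, h2, h3⟩
      exact ⟨⟨h1, ((p.prefix_append [c]).trans h2), h3⟩, h2⟩
    · rintro ⟨⟨h1, _, h3⟩, h2⟩
      exact ⟨h1, h2, h3⟩
  have key : ∀ s ∈ T.filter (fun s => p <+: s ∧ s ∉ S),
      ∃ c₀ : ℕ, (p ++ [c₀] <+: s) ∧ ∀ c ≠ c₀, ¬ (p ++ [c] <+: s) := by
    intro s hs
    simp only [Finset.mem_filter] at hs
    obtain ⟨r, rfl⟩ := hs.2.1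
    have hr : r ≠ [] := by rintro rfl; simp at hs; exact hp hs.1
    obtain ⟨c₀, r', rfl⟩ := List.exists_cons_of_ne_nil hr
    refine ⟨c₀, ?_, ?_⟩
    · rw [List.prefix_append_right_inj]
      exact ⟨r', by simp⟩
    · intro c hc hpre
      rw [List.prefix_append_right_inj] at hpre
      obtain ⟨u, hu⟩ := hpre
      simp at hu
      exact hc hu.1
  -- rewrite each child's mass as an indicator sum over the parent's filter set
  have hchild : ∀ c : ℕ, unsampledMass T S P (p ++ [c]) =
      ∑ s ∈ T.filter (fun s => p <+: s ∧ s ∉ S),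
        (if p ++ [c] <+: s then P s else 0) := by
    intro c
    unfold unsampledMass
    rw [hfilter c, Finset.sum_filter]
  calc ∑' c : ℕ, unsampledMass T S P (p ++ [c])
      = ∑' c : ℕ, ∑ s ∈ T.filter (fun s => p <+: s ∧ s ∉ S),
          (if p ++ [c] <+: s then P s else 0) := by
        exact tsum_congr hchild
    _ = ∑ s ∈ T.filter (fun s => p <+: s ∧ s ∉ S),
          ∑' c : ℕ, (if p ++ [c] <+: s then P s else 0) := by
        apply Summable.tsum_finsetSum
        intro s hs
        obtain ⟨c₀, hc₀, hunique⟩ := key s hs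
        exact summable_of_ne_finset_zero (s := {c₀}) (by
          intro c hc
          simp only [Finset.mem_singleton] at hc
          simp [hunique c hc])
    _ = ∑ s ∈ T.filter (fun s => p <+: s ∧ s ∉ S), P s := by
        apply Finset.sum_congr rfl
        intro s hs
        obtain ⟨c₀, hc₀, hunique⟩ := key s hs
        rw [tsum_eq_single c₀ (fun c hc => by simp [hunique c hc])]
        simp [hc₀]
    _ = unsampledMass T S P p := rfl

private lemma mass_pos (T S : Finset (List ℕ)) (P : List ℕ → ℝ)
    (hpos : ∀ t ∈ T, 0 < P t)
    (t : List ℕ) (ht : t ∈ T) (hts : t ∉ S) (p : List ℕ) (hpt : p <+: t) :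
    0 < unsampledMass T S P p := by
  unfold unsampledMass
  apply Finset.sum_pos'
  · intro s hs
    simp only [Finset.mem_filter] at hs
    exact (hpos s hs.1).le
  · exact ⟨t, by simp [Finset.mem_filter, ht, hpt, hts], hpos t ht⟩

/-- in the UniqueRandomizer trie, if at every node the sampler moves to a child
with probability proportional to that child's unsampled mass (child mass divided by the sum of
the masses of all children of the current node), then the probability of reaching the leaf
corresponding to a trace `t ∈ T` — the product of the transition probabilities along the
root-to-leaf path — equals `P(t)/(1 - ∑_{s∈S} P s)` if `t ∉ S` and `0` if `t ∈ S`,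
i.e. the sampled trace follows the conditional distribution `P(t ∣ t ∉ S)`. -/
theorem uniqueRandomizer_samples_conditional (T S : Finset (List ℕ)) (P : List ℕ → ℝ)
    (hpf : ∀ t₁ ∈ T, ∀ t₂ ∈ T, t₁ <+: t₂ → t₁ = t₂)
    (hpos : ∀ t ∈ T, 0 < P t) (hsum : ∑ t ∈ T, P t = 1)
    (hS : S ⊆ T) (hSlt : ∑ s ∈ S, P s < 1)
    (t : List ℕ) (ht : t ∈ T) :
    (∏ i ∈ Finset.range t.length,
        unsampledMass T S P (t.take (i + 1)) /
          ∑' c : ℕ, unsampledMass T S P (t.take i ++ [c])) =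
      if t ∈ S then 0 else P t / (1 - ∑ s ∈ S, P s) := by
  by_cases hts : t ∈ S
  · -- last factor is zero
    simp only [hts, if_true]
    have hlen : 0 < t.length := by
      rcases Nat.eq_zero_or_pos t.length with h | h
      · exfalso
        have ht0 : t = [] := List.eq_nil_of_length_eq_zero h
        subst ht0
        have hT : T = {[]} := by
          apply Finset.eq_singleton_iff_unique_mem.mpr
          exact ⟨ht, fun s hs => (hpf [] ht s hs (List.nil_prefix)).symm⟩
        have hSeq : S = {[]} := le_antisymm (hT ▸ hS) (Finset.singleton_subset_iff.mpr hts)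
        rw [hSeq] at hSlt
        rw [hT] at hsum
        simp only [Finset.sum_singleton] at hSlt hsum
        linarith
      · exact h
    apply Finset.prod_eq_zero (i := t.length - 1)
    · simp [Nat.sub_lt hlen Nat.one_pos]
    · rw [Nat.sub_add_cancel hlen, List.take_length,
        mass_leaf T S P hpf t ht]
      simp [hts]
  · simp only [hts, if_false]
    -- strict prefixes are not in T
    have hstrict : ∀ i < t.length, t.take i ∉ T := by
      intro i hi hmem
      have := hpf _ hmem t ht (List.take_prefix i t)
      have : (t.take i).length = t.length := by rw [this]
      rw [List.length_take] at this
      omega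
    have hne : ∀ i ≤ t.length, unsampledMass T S P (t.take i) ≠ 0 :=
      fun i _ => (mass_pos T S P hpos t ht hts _ (List.take_prefix i t)).ne'
    calc (∏ i ∈ Finset.range t.length,
          unsampledMass T S P (t.take (i + 1)) /
            ∑' c : ℕ, unsampledMass T S P (t.take i ++ [c]))
        = ∏ i ∈ Finset.range t.length,
            unsampledMass T S P (t.take (i + 1)) / unsampledMass T S P (t.take i) := by
          apply Finset.prod_congr rfl
          intro i hi
          rw [tsum_children T S P _ (hstrict i (Finset.mem_range.mp hi))]
      _ = unsampledMass T S P (t.take t.length) / unsampledMass T S P (t.take 0) :=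
          prod_div_telescope' (fun i => unsampledMass T S P (t.take i)) t.length hne
      _ = P t / (1 - ∑ s ∈ S, P s) := by
          rw [List.take_length, List.take_zero, mass_leaf T S P hpf t ht]
          simp only [hts, if_false]
          congr 1
          unfold unsampledMass
          have : T.filter (fun s => [] <+: s ∧ s ∉ S) = T \ S := by
            ext s
            simp [Finset.mem_sdiff, List.nil_prefix]
          rw [this, Finset.sum_sdiff_eq_sub hS, hsum]
end

section
/- Let G_i ∼ Gumbel(log p_i) be independent for i = 1,…,n with p_i > 0. Then P(argmax_i G_i = j) = p_j / ∑_i p_i. (The Gumbel-max trick: the index achieving the maximum Gumbel is distributed according to the normalized probabilities.) -/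
set_option maxHeartbeats 1000000


open MeasureTheory ProbabilityTheory

/-- The CDF of the Gumbel distribution with location `μ`. -/
noncomputable def gumbelCDF (μ x : ℝ) : ℝ := Real.exp (-Real.exp (-(x - μ)))

/-- `G` is distributed as `Gumbel(loc)` under `μ`. -/
def HasGumbelLaw {Ω : Type*} [MeasurableSpace Ω] (μ : Measure Ω) (G : Ω → ℝ) (loc : ℝ) :
    Prop :=
  ∀ x : ℝ, μ {ω | G ω ≤ x} = ENNReal.ofReal (gumbelCDF loc x)

open Set Filter Topology

/-- The pdf of the Gumbel distribution. -/
noncomputable def gumbelPDF (l x : ℝ) : ℝ :=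
  Real.exp (-(x - l)) * Real.exp (-Real.exp (-(x - l)))

lemma gumbelPDF_nonneg (l x : ℝ) : 0 ≤ gumbelPDF l x := by
  unfold gumbelPDF; positivity

lemma continuous_gumbelPDF (l : ℝ) : Continuous (gumbelPDF l) := by
  unfold gumbelPDF; continuity

lemma continuous_gumbelCDF (l : ℝ) : Continuous (gumbelCDF l) := by
  unfold gumbelCDF; continuity

lemma gumbelCDF_nonneg (l x : ℝ) : 0 ≤ gumbelCDF l x := (Real.exp_pos _).le

lemma gumbelCDF_le_one (l x : ℝ) : gumbelCDF l x ≤ 1 := by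
  unfold gumbelCDF
  rw [Real.exp_le_one_iff, neg_nonpos]
  exact (Real.exp_pos _).le

lemma hasDerivAt_gumbelCDF (l x : ℝ) : HasDerivAt (gumbelCDF l) (gumbelPDF l x) x := by
  have h4 := (((hasDerivAt_id x).sub_const l).neg.exp.neg).exp
  simp only [id_eq, Pi.neg_apply] at h4
  convert h4 using 1
  · rfl
  unfold gumbelPDF; ring

lemma tendsto_gumbelCDF_atBot (l : ℝ) : Tendsto (gumbelCDF l) atBot (𝓝 0) := by
  have h1 : Tendsto (fun x : ℝ => -(x - l)) atBot atTop := by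
    have h : Tendsto (fun x : ℝ => l + -x) atBot atTop :=
      tendsto_atTop_add_const_left atBot l tendsto_neg_atBot_atTop
    exact h.congr (fun x => by ring)
  have h2 : Tendsto (fun x : ℝ => -Real.exp (-(x - l))) atBot atBot :=
    tendsto_neg_atTop_atBot.comp (Real.tendsto_exp_atTop.comp h1)
  exact Real.tendsto_exp_atBot.comp h2

lemma tendsto_gumbelCDF_atTop (l : ℝ) : Tendsto (gumbelCDF l) atTop (𝓝 1) := by
  have h1 : Tendsto (fun x : ℝ => -(x - l)) atTop atBot := by
    have h : Tendsto (fun x : ℝ => l + -x) atTop atBot :=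
      tendsto_atBot_add_const_left atTop l tendsto_neg_atTop_atBot
    exact h.congr (fun x => by ring)
  have h2 : Tendsto (fun x : ℝ => Real.exp (-(x - l))) atTop (𝓝 0) :=
    Real.tendsto_exp_atBot.comp h1
  have h3 : Tendsto (fun x : ℝ => -Real.exp (-(x - l))) atTop (𝓝 0) := by
    simpa using h2.neg
  have h4 := (Real.continuous_exp.tendsto 0).comp h3
  have h5 : Real.exp 0 = 1 := Real.exp_zero
  rw [h5] at h4
  refine h4.congr fun x => ?_
  simp [Function.comp, gumbelCDF]

lemma integrable_gumbelPDF (l : ℝ) : Integrable (gumbelPDF l) := by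
  apply integrable_of_intervalIntegral_norm_bounded (a := fun n : ℕ => -(n : ℝ))
    (b := fun n : ℕ => (n : ℝ)) (l := atTop) (μ := volume) 1
  · exact fun i => (continuous_gumbelPDF l).integrableOn_Ioc
  · exact tendsto_neg_atTop_atBot.comp tendsto_natCast_atTop_atTop
  · exact tendsto_natCast_atTop_atTop
  · filter_upwards with n
    have hroot : ∀ x ∈ uIcc (-(n : ℝ)) (n : ℝ), HasDerivAt (gumbelCDF l) (gumbelPDF l x) x :=
      fun x _ => hasDerivAt_gumbelCDF l x
    have hint : IntervalIntegrable (gumbelPDF l) volume (-(n : ℝ)) (n : ℝ) :=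
      (continuous_gumbelPDF l).intervalIntegrable _ _
    have heq : (∫ x in (-(n : ℝ))..(n : ℝ), ‖gumbelPDF l x‖) =
        (∫ x in (-(n : ℝ))..(n : ℝ), gumbelPDF l x) := by
      apply intervalIntegral.integral_congr
      intro x _
      exact Real.norm_of_nonneg (gumbelPDF_nonneg l x)
    rw [heq, intervalIntegral.integral_eq_sub_of_hasDerivAt hroot hint]
    have := gumbelCDF_le_one l (n : ℝ)
    have := gumbelCDF_nonneg l (-(n : ℝ))
    linarith

lemma integral_gumbelPDF (l : ℝ) : ∫ x, gumbelPDF l x = 1 := by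
  have := integral_of_hasDerivAt_of_tendsto (fun x => hasDerivAt_gumbelCDF l x)
    (integrable_gumbelPDF l) (tendsto_gumbelCDF_atBot l) (tendsto_gumbelCDF_atTop l)
  simpa using this

lemma integral_gumbelPDF_Iic (l b : ℝ) : ∫ x in Iic b, gumbelPDF l x = gumbelCDF l b := by
  have := integral_Iic_of_hasDerivAt_of_tendsto' (a := b) (f := gumbelCDF l)
    (f' := gumbelPDF l) (fun x _ => hasDerivAt_gumbelCDF l x)
    (integrable_gumbelPDF l).integrableOn (tendsto_gumbelCDF_atBot l)
  simpa using this

/-- The Gumbel measure with location `l`. -/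
noncomputable def gumbelMeasure (l : ℝ) : Measure ℝ :=
  volume.withDensity fun x => ENNReal.ofReal (gumbelPDF l x)

lemma lintegral_gumbelPDF_Iic (l b : ℝ) :
    ∫⁻ x in Iic b, ENNReal.ofReal (gumbelPDF l x) = ENNReal.ofReal (gumbelCDF l b) := by
  rw [← ofReal_integral_eq_lintegral_ofReal (integrable_gumbelPDF l).integrableOn
    (ae_of_all _ (gumbelPDF_nonneg l)), integral_gumbelPDF_Iic]

lemma gumbelMeasure_Iic (l b : ℝ) :
    gumbelMeasure l (Iic b) = ENNReal.ofReal (gumbelCDF l b) := by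
  rw [gumbelMeasure, withDensity_apply _ measurableSet_Iic, lintegral_gumbelPDF_Iic]

lemma gumbelMeasure_Iio (l b : ℝ) :
    gumbelMeasure l (Iio b) = ENNReal.ofReal (gumbelCDF l b) := by
  rw [gumbelMeasure, withDensity_apply _ measurableSet_Iio,
    setLIntegral_congr (Iio_ae_eq_Iic (a := b)), lintegral_gumbelPDF_Iic]

instance isProbabilityMeasure_gumbelMeasure (l : ℝ) :
    IsProbabilityMeasure (gumbelMeasure l) := by
  constructor
  rw [gumbelMeasure, withDensity_apply _ MeasurableSet.univ, setLIntegral_univ,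
    ← ofReal_integral_eq_lintegral_ofReal (integrable_gumbelPDF l)
      (ae_of_all _ (gumbelPDF_nonneg l)), integral_gumbelPDF]
  simp

lemma map_eq_gumbelMeasure {Ω : Type*} [MeasurableSpace Ω] (μ : Measure Ω)
    [IsProbabilityMeasure μ] {G : Ω → ℝ} (hG : Measurable G) {l : ℝ}
    (h : HasGumbelLaw μ G l) : μ.map G = gumbelMeasure l := by
  haveI : IsProbabilityMeasure (μ.map G) := Measure.isProbabilityMeasure_map hG.aemeasurable
  refine MeasureTheory.Measure.ext_of_Iic (μ.map G) (gumbelMeasure l) (fun x => ?_)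
  rw [Measure.map_apply hG measurableSet_Iic, gumbelMeasure_Iic]
  exact h x

lemma map_pi_eq {Ω ι : Type*} [MeasurableSpace Ω] [Fintype ι] (μ : Measure Ω)
    [IsProbabilityMeasure μ] (G : ι → Ω → ℝ) (hmeas : ∀ i, Measurable (G i))
    (hindep : iIndepFun G μ) :
    μ.map (fun ω i => G i ω) = Measure.pi (fun i => μ.map (G i)) := by
  haveI : ∀ i, IsProbabilityMeasure (μ.map (G i)) :=
    fun i => Measure.isProbabilityMeasure_map (hmeas i).aemeasurable
  refine (Measure.pi_eq fun s hs => ?_).symm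
  rw [Measure.map_apply (measurable_pi_lambda _ hmeas) (MeasurableSet.univ_pi hs)]
  have hpre : (fun ω i => G i ω) ⁻¹' (univ.pi s) = ⋂ i ∈ Finset.univ, G i ⁻¹' s i := by
    ext ω; simp [Set.mem_univ_pi]
  rw [hpre, hindep.measure_inter_preimage_eq_mul Finset.univ (fun i _ => hs i)]
  exact Finset.prod_congr rfl fun i _ => (Measure.map_apply (hmeas i) (hs i)).symm

lemma gumbel_exp_eq (q t : ℝ) (hq : 0 < q) :
    Real.exp (-(t - Real.log q)) = q * Real.exp (-t) := by
  rw [neg_sub, Real.exp_sub, Real.exp_log hq, Real.exp_neg]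
  ring

lemma gumbelCDF_log (q t : ℝ) (hq : 0 < q) :
    gumbelCDF (Real.log q) t = Real.exp (-(q * Real.exp (-t))) := by
  rw [gumbelCDF, gumbel_exp_eq q t hq]

lemma gumbelPDF_log (q t : ℝ) (hq : 0 < q) :
    gumbelPDF (Real.log q) t = q * Real.exp (-t) * Real.exp (-(q * Real.exp (-t))) := by
  rw [gumbelPDF, gumbel_exp_eq q t hq]

/-- Gumbel-max trick: if `G i ∼ Gumbel(log pᵢ)` are independent with `pᵢ > 0`,
then the probability that the maximum is (strictly) attained at index `j` is
`p j / ∑ᵢ pᵢ`. -/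
theorem gumbel_argmax {Ω ι : Type*} [MeasurableSpace Ω] [Fintype ι] [Nonempty ι]
    (μ : Measure Ω) [IsProbabilityMeasure μ] (p : ι → ℝ) (hp : ∀ i, 0 < p i)
    (G : ι → Ω → ℝ) (hmeas : ∀ i, Measurable (G i))
    (hindep : iIndepFun G μ)
    (hlaw : ∀ i, HasGumbelLaw μ (G i) (Real.log (p i))) (j : ι) :
    μ {ω | ∀ i, i ≠ j → G i ω < G j ω} = ENNReal.ofReal (p j / ∑ i, p i) := by
  classical
  have hSpos : 0 < ∑ i, p i := Finset.sum_pos (fun i _ => hp i) Finset.univ_nonempty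
  have hmap : (fun i => μ.map (G i)) = fun i => gumbelMeasure (Real.log (p i)) :=
    funext fun i => map_eq_gumbelMeasure μ (hmeas i) (hlaw i)
  -- the event as a preimage under the joint map
  have hSet : MeasurableSet {x : ι → ℝ | ∀ i, i ≠ j → x i < x j} := by
    have h : {x : ι → ℝ | ∀ i, i ≠ j → x i < x j} = ⋂ i, {x | i ≠ j → x i < x j} := by
      ext x; simp [Set.mem_iInter]
    rw [h]
    refine MeasurableSet.iInter fun i => ?_
    by_cases hij : i = j
    · simp [hij]
    · have h2 : {x : ι → ℝ | i ≠ j → x i < x j} = {x | x i < x j} := by ext x; simp [hij]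
      rw [h2]
      exact measurableSet_lt (measurable_pi_apply i) (measurable_pi_apply j)
  have key : μ {ω | ∀ i, i ≠ j → G i ω < G j ω} =
      Measure.pi (fun i => gumbelMeasure (Real.log (p i)))
        {x : ι → ℝ | ∀ i, i ≠ j → x i < x j} := by
    rw [← hmap, ← map_pi_eq μ G hmeas hindep,
      Measure.map_apply (measurable_pi_lambda _ hmeas) hSet]
    rfl
  rw [key]
  -- split off coordinate j
  haveI : Unique {i : ι // i = j} := ⟨⟨⟨j, rfl⟩⟩, fun a => Subtype.ext a.2⟩
  set A : Set ((∀ _ : {i : ι // i = j}, ℝ) × (∀ _ : {i : ι // ¬ i = j}, ℝ)) :=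
    {z | ∀ i : {i : ι // ¬ i = j}, z.2 i < z.1 ⟨j, rfl⟩} with hA
  have hAmeas : MeasurableSet A := by
    have h : A = ⋂ i : {i : ι // ¬ i = j},
        {z : (∀ _ : {i : ι // i = j}, ℝ) × (∀ _ : {i : ι // ¬ i = j}, ℝ) |
          z.2 i < z.1 ⟨j, rfl⟩} := by
      ext z; simp [hA, Set.mem_iInter]
    rw [h]
    exact MeasurableSet.iInter fun i =>
      measurableSet_lt (measurable_snd.eval) (measurable_fst.eval)
  have hmp := measurePreserving_piEquivPiSubtypeProd
    (fun i => gumbelMeasure (Real.log (p i))) (fun i : ι => i = j)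
  have hpre : (MeasurableEquiv.piEquivPiSubtypeProd (fun _ : ι => ℝ) (fun i => i = j)) ⁻¹' A =
      {x : ι → ℝ | ∀ i, i ≠ j → x i < x j} := by
    ext x
    simp only [Set.mem_preimage, Set.mem_setOf_eq, MeasurableEquiv.piEquivPiSubtypeProd,
      Equiv.piEquivPiSubtypeProd, MeasurableEquiv.coe_mk, Equiv.coe_fn_mk, hA]
    constructor
    · intro h i hij
      exact h ⟨i, hij⟩
    · intro h i
      exact h i i.2
  have step1 : Measure.pi (fun i => gumbelMeasure (Real.log (p i)))
      {x : ι → ℝ | ∀ i, i ≠ j → x i < x j} =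
      ((Measure.pi fun i : {i : ι // i = j} => gumbelMeasure (Real.log (p i))).prod
        (Measure.pi fun i : {i : ι // ¬ i = j} => gumbelMeasure (Real.log (p i)))) A := by
    rw [← hpre, ← Measure.map_apply hmp.measurable hAmeas, hmp.map_eq]
    congr!
  rw [step1, Measure.prod_apply hAmeas]
  -- inner measure: a product of CDFs
  have inner : ∀ a : (∀ _ : {i : ι // i = j}, ℝ),
      (Measure.pi fun i : {i : ι // ¬ i = j} => gumbelMeasure (Real.log (p i)))
        (Prod.mk a ⁻¹' A) =
        ∏ i : {i : ι // ¬ i = j},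
          ENNReal.ofReal (gumbelCDF (Real.log (p i)) (a ⟨j, rfl⟩)) := by
    intro a
    have h : Prod.mk a ⁻¹' A =
        univ.pi (fun _ : {i : ι // ¬ i = j} => Iio (a ⟨j, rfl⟩)) := by
      ext b; simp [hA, Set.mem_univ_pi]
    rw [h, Measure.pi_pi]
    exact Finset.prod_congr rfl fun i _ => gumbelMeasure_Iio _ _
  simp only [inner]
  -- the one-coordinate pi measure
  have hconst : (fun i : {i : ι // i = j} => gumbelMeasure (Real.log (p i))) =
      fun _ => gumbelMeasure (Real.log (p j)) := by
    funext i
    have h2 : (i : ι) = j := i.2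
    rw [h2]
  rw [hconst]
  set g : ℝ → ENNReal := fun t =>
    ∏ i : {i : ι // ¬ i = j}, ENNReal.ofReal (gumbelCDF (Real.log (p i)) t) with hg
  have hgmeas : Measurable g := by
    rw [hg]
    exact Finset.measurable_prod _ fun i _ =>
      ENNReal.measurable_ofReal.comp (continuous_gumbelCDF _).measurable
  have step2 : (∫⁻ a : (∀ _ : {i : ι // i = j}, ℝ), g (a ⟨j, rfl⟩)
      ∂(Measure.pi fun _ : {i : ι // i = j} => gumbelMeasure (Real.log (p j)))) =
      ∫⁻ t, g t ∂(gumbelMeasure (Real.log (p j))) := by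
    have hmp2 := measurePreserving_funUnique (gumbelMeasure (Real.log (p j))) {i : ι // i = j}
    have h : (fun a : (∀ _ : {i : ι // i = j}, ℝ) => g (a ⟨j, rfl⟩)) =
        fun a => g (MeasurableEquiv.funUnique {i : ι // i = j} ℝ a) := by
      funext a
      simp only [MeasurableEquiv.funUnique_apply]
      exact congrArg g (congrArg a (Subsingleton.elim _ _))
    rw [h]
    refine Eq.trans ?_ (hmp2.lintegral_comp hgmeas)
    congr!
  rw [step2]
  -- now integrate against the Gumbel density
  have hdens : Measurable fun x => ENNReal.ofReal (gumbelPDF (Real.log (p j)) x) :=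
    ENNReal.measurable_ofReal.comp (continuous_gumbelPDF _).measurable
  have step3 : (∫⁻ t, g t ∂(gumbelMeasure (Real.log (p j)))) =
      ∫⁻ t, ENNReal.ofReal (gumbelPDF (Real.log (p j)) t) * g t := by
    rw [gumbelMeasure, lintegral_withDensity_eq_lintegral_mul _ hdens hgmeas]
    rfl
  rw [step3]
  -- pointwise identity
  have hsum_sub : ∑ i : {i : ι // ¬ i = j}, p (i : ι) = (∑ i, p i) - p j := by
    rw [← Finset.sum_subtype (Finset.univ.erase j)
      (fun x => by simp [Finset.mem_erase]) p,
      Finset.sum_erase_eq_sub (Finset.mem_univ j)]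
  have hpt : ∀ t : ℝ, ENNReal.ofReal (gumbelPDF (Real.log (p j)) t) * g t =
      ENNReal.ofReal ((p j / ∑ i, p i) * gumbelPDF (Real.log (∑ i, p i)) t) := by
    intro t
    simp only [hg]
    rw [← ENNReal.ofReal_prod_of_nonneg (fun i _ => gumbelCDF_nonneg _ _),
      ← ENNReal.ofReal_mul (gumbelPDF_nonneg _ _)]
    congr 1
    have hprod : (∏ i : {i : ι // ¬ i = j}, gumbelCDF (Real.log (p i)) t) =
        Real.exp (-(((∑ i, p i) - p j) * Real.exp (-t))) := by
      have h : ∀ i : {i : ι // ¬ i = j}, gumbelCDF (Real.log (p i)) t =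
          Real.exp (-(p i * Real.exp (-t))) := fun i => gumbelCDF_log _ _ (hp i)
      rw [Finset.prod_congr rfl (fun i _ => h i), ← Real.exp_sum]
      congr 1
      rw [Finset.sum_neg_distrib, ← Finset.sum_mul, hsum_sub]
    rw [hprod, gumbelPDF_log _ _ (hp j), gumbelPDF_log _ _ hSpos]
    rw [mul_assoc, ← Real.exp_add]
    have h : -(p j * Real.exp (-t)) + -(((∑ i, p i) - p j) * Real.exp (-t)) =
        -((∑ i, p i) * Real.exp (-t)) := by ring
    rw [h]
    field_simp
  simp only [hpt]
  have hmeasS : Measurable fun t => ENNReal.ofReal (gumbelPDF (Real.log (∑ i, p i)) t) :=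
    ENNReal.measurable_ofReal.comp (continuous_gumbelPDF _).measurable
  have hc : 0 ≤ p j / ∑ i, p i := div_nonneg (hp j).le hSpos.le
  simp_rw [ENNReal.ofReal_mul hc]
  rw [lintegral_const_mul _ hmeasS,
    ← ofReal_integral_eq_lintegral_ofReal (integrable_gumbelPDF _)
      (ae_of_all _ (gumbelPDF_nonneg _)), integral_gumbelPDF]
  simp
end
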